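/- arXiv:1407.1901 — 2 statements merged into one kernel-verified Lean document; each statement's English description precedes it below -/
import Mathlib

section
/- Let R = 6.455. For every real number x ≥ exp(9656.8), one has √(8/(17π)) · ((log x)/R)^{1/4} · exp(−√((log x)/R)) < 3223 / (log x)⁵. -/
open Real

lemma trudgian_base :
    Real.sqrt (8 / (17 * Real.pi)) * (6.455:ℝ) ^ 5 * (38.67835 : ℝ) ^ ((21:ℝ)/2)
      < 3223 * Real.exp 38.67835 := by
  have hpi : (3.141592 : ℝ) < Real.pi := Real.pi_gt_d6
  have hC : (0:ℝ) ≤ 8 / (17 * Real.pi) := by positivity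
  apply lt_of_pow_lt_pow_left₀ 2 (by positivity)
  have hs : Real.sqrt (8 / (17 * Real.pi)) ^ 2 = 8 / (17 * Real.pi) := Real.sq_sqrt hC
  have hb : ((38.67835 : ℝ) ^ ((21:ℝ)/2)) ^ (2:ℕ) = (38.67835:ℝ) ^ (21:ℕ) := by
    rw [← Real.rpow_natCast ((38.67835:ℝ) ^ ((21:ℝ)/2)) 2, ← Real.rpow_mul (by norm_num),
      ← Real.rpow_natCast (38.67835:ℝ) 21]
    norm_num
  have hexp2 : Real.exp 38.67835 ^ (2:ℕ) = Real.exp 77.3567 := by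
    rw [sq, ← Real.exp_add]; norm_num
  have hexp : (2.7182818283:ℝ)^(77:ℕ) * (1 + 0.3567/64)^(64:ℕ) ≤ Real.exp 77.3567 := by
    have h77 : Real.exp 77.3567 = Real.exp 1 ^ (77:ℕ) * Real.exp (0.3567/64) ^ (64:ℕ) := by
      rw [← Real.exp_nat_mul, ← Real.exp_nat_mul, ← Real.exp_add]
      norm_num
    rw [h77]
    have h1 : (2.7182818283:ℝ) ≤ Real.exp 1 := le_of_lt Real.exp_one_gt_d9
    have h2 : (1:ℝ) + 0.3567/64 ≤ Real.exp (0.3567/64) := by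
      have := Real.add_one_le_exp (0.3567/64 : ℝ); linarith
    gcongr <;> norm_num
  have hmain : 8 / (17 * Real.pi) * (6.455:ℝ)^(10:ℕ) * (38.67835:ℝ)^(21:ℕ)
      < 3223^2 * Real.exp 77.3567 := by
    have hπ : 8 / (17 * Real.pi) ≤ 8 / (17 * 3.141592) := by
      gcongr
      all_goals linarith
    calc 8 / (17 * Real.pi) * (6.455:ℝ)^(10:ℕ) * (38.67835:ℝ)^(21:ℕ)
        ≤ 8 / (17 * 3.141592) * (6.455:ℝ)^(10:ℕ) * (38.67835:ℝ)^(21:ℕ) := by gcongr <;> norm_num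
      _ < 3223^2 * ((2.7182818283:ℝ)^(77:ℕ) * (1 + 0.3567/64)^(64:ℕ)) := by norm_num
      _ ≤ 3223^2 * Real.exp 77.3567 := by gcongr <;> norm_num
  calc (Real.sqrt (8 / (17 * Real.pi)) * (6.455:ℝ) ^ 5 * (38.67835 : ℝ) ^ ((21:ℝ)/2)) ^ (2:ℕ)
      = Real.sqrt (8 / (17 * Real.pi)) ^ (2:ℕ) * ((6.455:ℝ)^5)^(2:ℕ)
          * ((38.67835 : ℝ) ^ ((21:ℝ)/2)) ^ (2:ℕ) := by ring
    _ = 8 / (17 * Real.pi) * (6.455:ℝ)^(10:ℕ) * (38.67835:ℝ)^(21:ℕ) := by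
        rw [hs, hb]; norm_num
    _ < 3223^2 * Real.exp 77.3567 := hmain
    _ = (3223 * Real.exp 38.67835) ^ (2:ℕ) := by rw [mul_pow, hexp2]

lemma trudgian_key (u : ℝ) (hu : 38.67835 ≤ u) :
    Real.sqrt (8 / (17 * Real.pi)) * u ^ ((1:ℝ)/2) * (6.455 * u^2)^5 < 3223 * Real.exp u := by
  have hu0 : (0:ℝ) < 38.67835 := by norm_num
  have hupos : (0:ℝ) < u := lt_of_lt_of_le hu0 hu
  have hA : u ^ ((1:ℝ)/2) * u^(10:ℕ) = u ^ ((21:ℝ)/2) := by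
    rw [← Real.rpow_natCast u 10, ← Real.rpow_add hupos]; norm_num
  have hmono : u ^ ((21:ℝ)/2) ≤ (38.67835:ℝ) ^ ((21:ℝ)/2) * Real.exp (u - 38.67835) := by
    rw [Real.rpow_def_of_pos hupos, Real.rpow_def_of_pos hu0, ← Real.exp_add]
    apply Real.exp_le_exp.mpr
    have hlog : Real.log u - Real.log 38.67835 ≤ (u - 38.67835) / 38.67835 := by
      rw [← Real.log_div (ne_of_gt hupos) (by norm_num)]
      have h := Real.log_le_sub_one_of_pos (show (0:ℝ) < u / 38.67835 by positivity)
      calc Real.log (u/38.67835) ≤ u/38.67835 - 1 := h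
        _ = (u - 38.67835)/38.67835 := by ring
    have h2 : (21:ℝ)/2 * ((u - 38.67835) / 38.67835) ≤ u - 38.67835 := by
      have h3 : (u - 38.67835) / 38.67835 * (21/2) ≤ u - 38.67835 := by
        rw [div_mul_eq_mul_div, div_le_iff₀ hu0]
        nlinarith
      linarith
    linarith
  have hnn : (0:ℝ) ≤ Real.sqrt (8 / (17 * Real.pi)) * (6.455:ℝ)^5 := by positivity
  calc Real.sqrt (8 / (17 * Real.pi)) * u ^ ((1:ℝ)/2) * (6.455 * u^2)^5
      = Real.sqrt (8 / (17 * Real.pi)) * (6.455:ℝ)^5 * (u ^ ((1:ℝ)/2) * u^(10:ℕ)) := by ring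
    _ = Real.sqrt (8 / (17 * Real.pi)) * (6.455:ℝ)^5 * u ^ ((21:ℝ)/2) := by rw [hA]
    _ ≤ Real.sqrt (8 / (17 * Real.pi)) * (6.455:ℝ)^5 *
        ((38.67835:ℝ) ^ ((21:ℝ)/2) * Real.exp (u - 38.67835)) := by
        exact mul_le_mul_of_nonneg_left hmono hnn
    _ = (Real.sqrt (8 / (17 * Real.pi)) * (6.455:ℝ)^5 * (38.67835:ℝ) ^ ((21:ℝ)/2))
          * Real.exp (u - 38.67835) := by ring
    _ < (3223 * Real.exp 38.67835) * Real.exp (u - 38.67835) :=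
        mul_lt_mul_of_pos_right trudgian_base (Real.exp_pos _)
    _ = 3223 * Real.exp u := by
        rw [mul_assoc, ← Real.exp_add]
        norm_num

theorem trudgian_bound_numerics (R : ℝ) (hR : R = 6.455) :
    ∀ x : ℝ, x ≥ Real.exp 9656.8 →
      Real.sqrt (8 / (17 * Real.pi)) * (Real.log x / R) ^ ((1 : ℝ) / 4) *
          Real.exp (-Real.sqrt (Real.log x / R)) <
        3223 / Real.log x ^ 5 := by
  subst hR
  intro x hx
  have hL : (9656.8:ℝ) ≤ Real.log x := by
    have := Real.log_le_log (Real.exp_pos 9656.8) hx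
    rwa [Real.log_exp] at this
  have hLpos : (0:ℝ) < Real.log x := by linarith
  set L := Real.log x with hLdef
  set u := Real.sqrt (L / 6.455) with hudef
  have hu2 : u^2 = L/6.455 := Real.sq_sqrt (by positivity)
  have hLu : L = 6.455 * u^2 := by rw [hu2]; field_simp
  have hu : (38.67835:ℝ) ≤ u := by
    have hq : (38.67835:ℝ)^2 ≤ L / 6.455 := by
      rw [le_div_iff₀ (by norm_num)]
      nlinarith
    have := Real.sqrt_le_sqrt hq
    rwa [Real.sqrt_sq (by norm_num : (0:ℝ) ≤ 38.67835)] at this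
  have hupos : (0:ℝ) < u := lt_of_lt_of_le (by norm_num) hu
  have hq4 : (L / 6.455) ^ ((1:ℝ)/4) = u ^ ((1:ℝ)/2) := by
    rw [show L / 6.455 = u ^ (2:ℕ) from hu2.symm, ← Real.rpow_natCast u 2,
      ← Real.rpow_mul hupos.le]
    norm_num
  rw [hq4, lt_div_iff₀ (by positivity : (0:ℝ) < L^5)]
  have h := trudgian_key u hu
  have hepos : (0:ℝ) < Real.exp (-u) := Real.exp_pos _
  calc Real.sqrt (8 / (17 * Real.pi)) * u ^ ((1:ℝ)/2) * Real.exp (-u) * L^5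
      = (Real.sqrt (8 / (17 * Real.pi)) * u ^ ((1:ℝ)/2) * (6.455 * u^2)^5) * Real.exp (-u) := by
        rw [hLu]; ring
    _ < (3223 * Real.exp u) * Real.exp (-u) := mul_lt_mul_of_pos_right h hepos
    _ = 3223 := by rw [mul_assoc, ← Real.exp_add, add_neg_cancel, Real.exp_zero, mul_one]
end

section
/- For every real number x ≥ 4, one has ∫₂ˣ dt/(log t)⁷ < x/(log x)⁷ + 7·( √x/(log 2)⁸ + 2⁸·x/(log x)⁸ ). -/
/-!
Since `d/dt (t / log t ^ n) = 1 / log t ^ n - n / log t ^ (n + 1)`, integrating by parts gives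
`∫₂ˣ dt / log⁷ t = x / log⁷ x - 2 / log⁷ 2 + 7 ∫₂ˣ dt / log⁸ t`, and dropping `-2 / log⁷ 2 < 0`
makes the inequality strict. The remaining integral is split at `√x`: below `√x` the integrand
is at most `1 / log⁸ 2`, above it `log t ≥ (log x) / 2` bounds it by `2⁸ / log⁸ x`.
-/

open Real intervalIntegral

lemma continuousOn_inv_log_pow (n : ℕ) :
    ContinuousOn (fun t => 1 / log t ^ n) (Set.Ioi 1) := by
  refine continuousOn_const.div ((continuousOn_log.mono fun t ht => ?_).pow n) fun t ht => ?_
  · exact ne_of_gt (zero_lt_one.trans ht)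
  · exact pow_ne_zero n (log_pos ht).ne'

lemma intervalIntegrable_inv_log_pow (n : ℕ) {a b : ℝ} (ha : 1 < a) (hb : 1 < b) :
    IntervalIntegrable (fun t => 1 / log t ^ n) MeasureTheory.volume a b :=
  ((continuousOn_inv_log_pow n).mono fun _ ht =>
    lt_of_lt_of_le (lt_min ha hb) ht.1).intervalIntegrable

lemma hasDerivAt_div_log_pow (n : ℕ) {t : ℝ} (ht : t ≠ 0) (hlog : log t ≠ 0) :
    HasDerivAt (fun t => t / log t ^ n) (1 / log t ^ n - n / log t ^ (n + 1)) t := by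
  refine ((hasDerivAt_id' t).fun_div ((hasDerivAt_log ht).pow n)
    (pow_ne_zero n hlog)).congr_deriv ?_
  rcases n with _ | n
  · simp
  · simp only [Pi.pow_apply, Nat.add_sub_cancel]
    field_simp
    ring

theorem integral_inv_log_pow_eq (n : ℕ) {a b : ℝ} (ha : 1 < a) (hb : 1 < b) :
    ∫ t in a..b, 1 / log t ^ n =
      b / log b ^ n - a / log a ^ n + n * ∫ t in a..b, 1 / log t ^ (n + 1) := by
  have hint := intervalIntegrable_inv_log_pow n ha hb
  have hint' := (intervalIntegrable_inv_log_pow (n + 1) ha hb).const_mul (n : ℝ)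
  have hderiv : ∀ t ∈ Set.uIcc a b,
      HasDerivAt (fun t => t / log t ^ n) (1 / log t ^ n - n * (1 / log t ^ (n + 1))) t := by
    intro t ht
    have ht1 : 1 < t := lt_of_lt_of_le (lt_min ha hb) ht.1
    rw [mul_one_div]
    exact hasDerivAt_div_log_pow n (by positivity) (log_pos ht1).ne'
  have hftc := integral_eq_sub_of_hasDerivAt hderiv (hint.sub hint')
  rw [integral_sub hint hint', integral_const_mul] at hftc
  linarith

theorem integral_inv_log_pow_le (n : ℕ) {a b : ℝ} (ha : 1 < a) (hab : a ≤ b) :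
    ∫ t in a..b, 1 / log t ^ n ≤ (b - a) / log a ^ n := by
  have hloga := log_pos ha
  have hmono := integral_mono_on hab (intervalIntegrable_inv_log_pow n ha (ha.trans_le hab))
    intervalIntegrable_const fun t ht => one_div_le_one_div_of_le (by positivity)
      (pow_le_pow_left₀ hloga.le (log_le_log (by linarith) ht.1) n)
  rwa [integral_const, smul_eq_mul, mul_one_div] at hmono

theorem integral_inv_log_pow_le_sqrt (n : ℕ) {x : ℝ} (hx : 4 ≤ x) :
    ∫ t in (2 : ℝ)..x, 1 / log t ^ n ≤ √x / log 2 ^ n + 2 ^ n * x / log x ^ n := by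
  have hsqrt_ge : 2 ≤ √x := (le_sqrt zero_le_two (by linarith)).2 (by linarith)
  have hsqrt_le : √x ≤ x := (sqrt_le_left (by linarith)).2 (by nlinarith)
  have hlow := integral_inv_log_pow_le n one_lt_two hsqrt_ge
  have hhigh := integral_inv_log_pow_le n (by linarith) hsqrt_le
  rw [log_sqrt (by linarith), div_pow, div_div_eq_mul_div] at hhigh
  have hlow' : (√x - 2) / log 2 ^ n ≤ √x / log 2 ^ n := by
    have := log_pos one_lt_two
    gcongr
    linarith
  have hhigh' : (x - √x) * 2 ^ n / log x ^ n ≤ 2 ^ n * x / log x ^ n := by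
    have := log_pos (by linarith : 1 < x)
    rw [mul_comm]
    gcongr
    linarith
  rw [← integral_add_adjacent_intervals
    (intervalIntegrable_inv_log_pow n (b := √x) one_lt_two (by linarith))
    (intervalIntegrable_inv_log_pow n (by linarith) (by linarith))]
  linarith

theorem integral_inv_log_pow_seven_lt (x : ℝ) (hx : x ≥ 4) :
    (∫ t in (2 : ℝ)..x, 1 / Real.log t ^ 7) <
      x / Real.log x ^ 7 +
        7 * (Real.sqrt x / Real.log 2 ^ 8 + 2 ^ 8 * x / Real.log x ^ 8) := by
  rw [integral_inv_log_pow_eq 7 one_lt_two (by linarith)]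
  have hbound := integral_inv_log_pow_le_sqrt 8 hx
  have hpos : 0 < 2 / log 2 ^ 7 := by
    have := log_pos one_lt_two
    positivity
  push_cast
  linarith
end
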